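/- arXiv:2603.09010 — 7 statements merged into one kernel-verified Lean document; each statement's English description precedes it below -/
import Mathlib

section
/- The polynomial map f(x,y,z) = (y, x + y − y³, 2z − y) is an automorphism of affine 3-space over ℚ, with inverse given by f⁻¹(x,y,z) = (y − x + x³, x, (z + x)/2) (i.e. f ∘ f⁻¹ = f⁻¹ ∘ f = id as polynomial maps). Moreover, writing deg(f^n) for the maximum of the total degrees of the three coordinate polynomials of the n-th iterate f^n ∈ ℚ[x,y,z]³, one has lim_{n→∞} deg(f^n)^{1/n} = 3 and lim_{n→∞} deg((f⁻¹)^n)^{1/n} = 3 (so the first and second dynamical degrees of f both equal 3). -/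
/-!
Composition of polynomial maps is substitution (`bind₁`), so `deg (g ∘ h) ≤ deg g · deg h` and
`deg f^n`, `deg f^{-n}` are at most `3^n`. Conversely, restricting a polynomial to a line does
not raise its degree. Along the `y`-axis the first two coordinates of `f^n` evolve by
`(a, b) ↦ (b, a + b - b³)`, and along the `x`-axis those of `f^{-n}` by `(a, b) ↦ (b - a + a³, a)`;
in both recursions the cube dominates, so the degree in the line parameter triples at each step.
Hence `deg f^n = deg f^{-n} = 3^n`, and the `n`-th roots are eventually equal to `3`.
-/

open MvPolynomial

/-- The coordinate polynomials of `f(x,y,z) = (y, x + y - y^3, 2z - y)`. -/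
noncomputable def fPoly : Fin 3 → MvPolynomial (Fin 3) ℚ :=
  ![X 1, X 0 + X 1 - (X 1) ^ 3, 2 * X 2 - X 1]

/-- The coordinate polynomials of `f⁻¹(x,y,z) = (y - x + x^3, x, (z + x)/2)`. -/
noncomputable def fInvPoly : Fin 3 → MvPolynomial (Fin 3) ℚ :=
  ![X 1 - X 0 + (X 0) ^ 3, X 0, C (1 / 2 : ℚ) * (X 2 + X 0)]

/-- Coordinate polynomials of the `n`-th iterate of `f`
(composition of polynomial maps is given by substitution, i.e. `bind₁`). -/
noncomputable def fIter : ℕ → Fin 3 → MvPolynomial (Fin 3) ℚ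
  | 0 => fun i => X i
  | n + 1 => fun i => bind₁ fPoly (fIter n i)

/-- Coordinate polynomials of the `n`-th iterate of `f⁻¹`. -/
noncomputable def fInvIter : ℕ → Fin 3 → MvPolynomial (Fin 3) ℚ
  | 0 => fun i => X i
  | n + 1 => fun i => bind₁ fInvPoly (fInvIter n i)

/-- `deg (f^n)`: the maximum of the total degrees of the coordinate polynomials of `f^n`. -/
noncomputable def degFIter (n : ℕ) : ℕ :=
  Finset.univ.sup fun i => (fIter n i).totalDegree

/-- `deg ((f⁻¹)^n)`. -/
noncomputable def degFInvIter (n : ℕ) : ℕ :=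
  Finset.univ.sup fun i => (fInvIter n i).totalDegree

namespace MvPolynomial

variable {R σ τ : Type*} [CommSemiring R]

theorem totalDegree_bind₁_le {g : σ → MvPolynomial τ R} {d : ℕ}
    (hg : ∀ i, (g i).totalDegree ≤ d) (p : MvPolynomial σ R) :
    (bind₁ g p).totalDegree ≤ d * p.totalDegree := by
  conv_lhs => rw [p.as_sum, map_sum]
  refine totalDegree_finsetSum_le fun s hs => ?_
  rw [bind₁_monomial]
  refine (totalDegree_mul _ _).trans ?_
  rw [totalDegree_C, zero_add]
  calc (∏ i ∈ s.support, g i ^ s i).totalDegree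
      ≤ ∑ i ∈ s.support, (g i ^ s i).totalDegree := totalDegree_finsetProd _ _
    _ ≤ ∑ i ∈ s.support, d * s i := Finset.sum_le_sum fun i _ =>
        ((totalDegree_pow _ _).trans (Nat.mul_le_mul_left _ (hg i))).trans_eq (mul_comm _ _)
    _ = d * ∑ i ∈ s.support, s i := (Finset.mul_sum _ _ _).symm
    _ ≤ d * p.totalDegree := Nat.mul_le_mul_left _ (le_totalDegree hs)

theorem totalDegree_iterate_bind₁_le {P : σ → MvPolynomial σ R} {d : ℕ}
    (hP : ∀ i, (P i).totalDegree ≤ d) (n : ℕ) (p : MvPolynomial σ R) :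
    ((bind₁ P)^[n] p).totalDegree ≤ d ^ n * p.totalDegree := by
  induction n with
  | zero => simp
  | succ n ih =>
    rw [Function.iterate_succ_apply', pow_succ, mul_comm _ d, mul_assoc]
    exact (totalDegree_bind₁_le hP _).trans (Nat.mul_le_mul_left d ih)

theorem natDegree_aeval_le_totalDegree {v : σ → Polynomial R}
    (hv : ∀ i, (v i).natDegree ≤ 1) (p : MvPolynomial σ R) :
    (aeval v p).natDegree ≤ p.totalDegree := by
  conv_lhs => rw [p.as_sum, map_sum]
  refine Polynomial.natDegree_sum_le_of_forall_le _ _ fun s hs => ?_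
  rw [aeval_monomial, Finsupp.prod, Polynomial.algebraMap_eq]
  refine Polynomial.natDegree_C_mul_le _ _ |>.trans ?_
  calc (∏ i ∈ s.support, v i ^ s i).natDegree
      ≤ ∑ i ∈ s.support, (v i ^ s i).natDegree := Polynomial.natDegree_prod_le _ _
    _ ≤ ∑ i ∈ s.support, s i := Finset.sum_le_sum fun i _ =>
        Polynomial.natDegree_pow_le.trans (by simpa using Nat.mul_le_mul_left (s i) (hv i))
    _ ≤ p.totalDegree := le_totalDegree hs

variable {S : Type*} [CommSemiring S] [Algebra R S]

noncomputable def polyMap (P : σ → MvPolynomial σ R) (v : σ → S) : σ → S :=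
  fun i => aeval v (P i)

theorem aeval_iterate_bind₁ (P : σ → MvPolynomial σ R) (n : ℕ) (v : σ → S)
    (p : MvPolynomial σ R) :
    aeval v ((bind₁ P)^[n] p) = aeval ((polyMap P)^[n] v) p := by
  induction n generalizing v with
  | zero => rfl
  | succ n ih =>
    rw [Function.iterate_succ_apply', aeval_bind₁]
    exact ih (polyMap P v)

theorem sup_totalDegree_iterate_bind₁_eq [Fintype σ] {P : σ → MvPolynomial σ R} {d : ℕ}
    (hP : ∀ i, (P i).totalDegree ≤ d) {n : ℕ} {v : σ → Polynomial R}
    (hv : ∀ i, (v i).natDegree ≤ 1) (i : σ) (hvi : ((polyMap P)^[n] v i).natDegree = d ^ n) :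
    Finset.univ.sup (fun j => ((bind₁ P)^[n] (X j)).totalDegree) = d ^ n := by
  refine le_antisymm (Finset.sup_le fun j _ => ?_) ?_
  · exact (totalDegree_iterate_bind₁_le hP n _).trans
      (mul_le_of_le_one_right' ((totalDegree_monomial_le _ _).trans_eq (by simp)))
  · calc d ^ n = (aeval v ((bind₁ P)^[n] (X i))).natDegree := by
          rw [aeval_iterate_bind₁, aeval_X, hvi]
      _ ≤ ((bind₁ P)^[n] (X i)).totalDegree := natDegree_aeval_le_totalDegree hv _
      _ ≤ _ := Finset.le_sup (f := fun j => ((bind₁ P)^[n] (X j)).totalDegree)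
          (Finset.mem_univ i)

end MvPolynomial

theorem C_half_mul_two {σ : Type*} : (C 2⁻¹ * 2 : MvPolynomial σ ℚ) = 1 := by
  rw [← map_ofNat C 2, ← C_mul, inv_mul_cancel₀ two_ne_zero, C_1]

theorem fInvPoly_bind₁_fPoly (i : Fin 3) : bind₁ fInvPoly (fPoly i) = X i := by
  fin_cases i <;>
    simp only [fPoly, fInvPoly, Fin.isValue, Fin.zero_eta, Fin.mk_one, Fin.reduceFinMk,
      Matrix.cons_val, Matrix.cons_val_zero, Matrix.cons_val_one, map_add, map_sub, map_mul,
    map_pow, map_ofNat, bind₁_X_right, one_div]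
  · ring
  · linear_combination (X 2 + X 0) * C_half_mul_two

theorem fPoly_bind₁_fInvPoly (i : Fin 3) : bind₁ fPoly (fInvPoly i) = X i := by
  fin_cases i <;>
    simp only [fPoly, fInvPoly, Fin.isValue, Fin.zero_eta, Fin.mk_one, Fin.reduceFinMk,
      Matrix.cons_val, Matrix.cons_val_zero, Matrix.cons_val_one, map_add, map_sub, map_mul,
    map_pow, algHom_C, algebraMap_eq, bind₁_X_right, one_div]
  · ring
  · linear_combination X 2 * C_half_mul_two

theorem fPoly_totalDegree_le (i : Fin 3) : (fPoly i).totalDegree ≤ 3 := by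
  fin_cases i
  · simp [fPoly]
  · exact (totalDegree_sub _ _).trans (max_le ((totalDegree_add _ _).trans (by simp))
      ((totalDegree_pow _ _).trans (by simp)))
  · exact (totalDegree_sub _ _).trans (max_le ((totalDegree_mul _ _).trans
      (by simp [← map_ofNat C 2])) (by simp))

theorem fInvPoly_totalDegree_le (i : Fin 3) : (fInvPoly i).totalDegree ≤ 3 := by
  fin_cases i
  · exact (totalDegree_add _ _).trans (max_le ((totalDegree_sub _ _).trans (by simp))
      ((totalDegree_pow _ _).trans (by simp)))
  · simp [fInvPoly]
  · exact (totalDegree_mul _ _).trans (by simpa using (totalDegree_add _ _).trans (by simp))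

theorem fIter_eq_iterate_bind₁ (n : ℕ) (i : Fin 3) : fIter n i = (bind₁ fPoly)^[n] (X i) := by
  induction n with
  | zero => rfl
  | succ n ih => rw [Function.iterate_succ_apply', ← ih]; rfl

theorem fInvIter_eq_iterate_bind₁ (n : ℕ) (i : Fin 3) :
    fInvIter n i = (bind₁ fInvPoly)^[n] (X i) := by
  induction n with
  | zero => rfl
  | succ n ih => rw [Function.iterate_succ_apply', ← ih]; rfl

section Orbit

variable {S : Type*} [CommRing S] [Algebra ℚ S] (v : Fin 3 → S)

theorem polyMap_fPoly_zero : polyMap fPoly v 0 = v 1 := by simp [polyMap, fPoly]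
theorem polyMap_fPoly_one : polyMap fPoly v 1 = v 0 + v 1 - v 1 ^ 3 := by simp [polyMap, fPoly]
theorem polyMap_fInvPoly_zero : polyMap fInvPoly v 0 = v 1 - v 0 + v 0 ^ 3 := by
  simp [polyMap, fInvPoly]
theorem polyMap_fInvPoly_one : polyMap fInvPoly v 1 = v 0 := by simp [polyMap, fInvPoly]

end Orbit

noncomputable def yAxis : Fin 3 → Polynomial ℚ := ![0, Polynomial.X, 0]

noncomputable def xAxis : Fin 3 → Polynomial ℚ := ![Polynomial.X, 0, 0]

theorem natDegree_iterate_polyMap_fPoly (n : ℕ) :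
    ((polyMap fPoly)^[n] yAxis 0).natDegree < 3 ^ n ∧
    ((polyMap fPoly)^[n] yAxis 1).natDegree = 3 ^ n := by
  induction n with
  | zero => simp [yAxis]
  | succ n ih =>
    obtain ⟨ha, hb⟩ := ih
    set a := (polyMap fPoly)^[n] yAxis 0
    set b := (polyMap fPoly)^[n] yAxis 1
    have hlt : 3 ^ n < 3 ^ (n + 1) := Nat.pow_lt_pow_succ (by norm_num)
    have hb3 : (b ^ 3).natDegree = 3 ^ (n + 1) := by
      rw [Polynomial.natDegree_pow, hb, pow_succ, mul_comm]
    have hab : (a + b).natDegree < (b ^ 3).natDegree :=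
      hb3 ▸ (Polynomial.natDegree_add_le _ _).trans_lt (max_lt (ha.trans hlt) (hb ▸ hlt))
    rw [Function.iterate_succ_apply', polyMap_fPoly_zero, polyMap_fPoly_one,
      Polynomial.natDegree_sub_eq_right_of_natDegree_lt hab, hb3]
    exact ⟨hb ▸ hlt, rfl⟩

theorem natDegree_iterate_polyMap_fInvPoly (n : ℕ) :
    ((polyMap fInvPoly)^[n] xAxis 0).natDegree = 3 ^ n ∧
    ((polyMap fInvPoly)^[n] xAxis 1).natDegree < 3 ^ n := by
  induction n with
  | zero => simp [xAxis]
  | succ n ih =>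
    obtain ⟨ha, hb⟩ := ih
    set a := (polyMap fInvPoly)^[n] xAxis 0
    set b := (polyMap fInvPoly)^[n] xAxis 1
    have hlt : 3 ^ n < 3 ^ (n + 1) := Nat.pow_lt_pow_succ (by norm_num)
    have ha3 : (a ^ 3).natDegree = 3 ^ (n + 1) := by
      rw [Polynomial.natDegree_pow, ha, pow_succ, mul_comm]
    have hba : (b - a).natDegree < (a ^ 3).natDegree :=
      ha3 ▸ (Polynomial.natDegree_sub_le _ _).trans_lt (max_lt (hb.trans hlt) (ha ▸ hlt))
    rw [Function.iterate_succ_apply', polyMap_fInvPoly_zero, polyMap_fInvPoly_one,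
      Polynomial.natDegree_add_eq_right_of_natDegree_lt hba, ha3]
    exact ⟨rfl, ha ▸ hlt⟩

theorem degFIter_eq (n : ℕ) : degFIter n = 3 ^ n := by
  simp only [degFIter, fIter_eq_iterate_bind₁]
  refine sup_totalDegree_iterate_bind₁_eq fPoly_totalDegree_le (fun i => ?_) 1
    (natDegree_iterate_polyMap_fPoly n).2
  fin_cases i <;> simp [yAxis]

theorem degFInvIter_eq (n : ℕ) : degFInvIter n = 3 ^ n := by
  simp only [degFInvIter, fInvIter_eq_iterate_bind₁]
  refine sup_totalDegree_iterate_bind₁_eq fInvPoly_totalDegree_le (fun i => ?_) 0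
    (natDegree_iterate_polyMap_fInvPoly n).1
  fin_cases i <;> simp [xAxis]

theorem tendsto_pow_rpow_inv_natCast {x : ℝ} (hx : 0 ≤ x) :
    Filter.Tendsto (fun n : ℕ => (x ^ n) ^ ((n : ℝ)⁻¹)) Filter.atTop (nhds x) := by
  refine tendsto_const_nhds.congr' ?_
  filter_upwards [Filter.eventually_ne_atTop 0] with n hn
  rw [Real.pow_rpow_inv_natCast hx hn]

/-- The polynomial map `f(x,y,z) = (y, x + y - y³, 2z - y)` is an automorphism of `𝔸³_ℚ`
with inverse `f⁻¹(x,y,z) = (y - x + x³, x, (z + x)/2)`, and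
`lim deg(f^n)^{1/n} = lim deg((f⁻¹)^n)^{1/n} = 3`,
i.e. the first and second dynamical degrees of `f` are both `3`. -/
theorem stmt0 :
    (∀ i, bind₁ fInvPoly (fPoly i) = X i) ∧
    (∀ i, bind₁ fPoly (fInvPoly i) = X i) ∧
    Filter.Tendsto (fun n : ℕ => (degFIter n : ℝ) ^ ((n : ℝ)⁻¹)) Filter.atTop (nhds 3) ∧
    Filter.Tendsto (fun n : ℕ => (degFInvIter n : ℝ) ^ ((n : ℝ)⁻¹)) Filter.atTop (nhds 3) := by
  simp only [degFIter_eq, degFInvIter_eq]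
  push_cast
  exact ⟨fInvPoly_bind₁_fPoly, fPoly_bind₁_fInvPoly, tendsto_pow_rpow_inv_natCast zero_le_three,
    tendsto_pow_rpow_inv_natCast zero_le_three⟩
end

section
/- Let (x₀,y₀) ∈ ℚ̄² be a periodic point of g, i.e. g^n(x₀,y₀) = (x₀,y₀) for some n ≥ 1. Then x₀ and y₀ are integral over ℤ. -/
/-- A fixed algebraic closure of `ℚ`. -/
noncomputable def Qbar : Type := AlgebraicClosure ℚ

noncomputable instance : Field Qbar := inferInstanceAs (Field (AlgebraicClosure ℚ))
noncomputable instance : Algebra ℚ Qbar := inferInstanceAs (Algebra ℚ (AlgebraicClosure ℚ))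

/-- The Hénon map `g(x,y) = (y, x + y - y³)` on `ℚ̄²`. -/
noncomputable def gA (P : Qbar × Qbar) : Qbar × Qbar :=
  (P.2, P.1 + P.2 - P.2 ^ 3)

/-!
Write `yᵢ` for the second coordinate of `gⁱ P`; the first coordinate of `gⁱ⁺¹ P` is `yᵢ`, so
`yᵢ₊₁³ = yᵢ + yᵢ₊₁ - yᵢ₊₂`, and `(yᵢ)` is periodic. For any valuation `v`, let `M` be the largest
value of `v` along this finite orbit; it is attained at some `yⱼ₊₁`, and the ultrametric
inequality gives `M³ ≤ M`, hence `M ≤ 1`. An element of a field lying in every valuation subring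
is integral over `ℤ`.
-/

lemma IsIntegral.of_forall_mem_valuationSubring {K : Type*} [Field K] {x : K}
    (hx : ∀ V : ValuationSubring K, x ∈ V) : IsIntegral ℤ x := by
  by_contra hxR
  obtain ⟨V, -, hxV⟩ :=
    (integralClosure ℤ K).toSubring.exists_le_valuationSubring_of_isIntegrallyClosedIn hxR
  exact hxV (hx V)

lemma Function.Periodic.exists_forall_le_succ {α : Type*} [LinearOrder α] {f : ℕ → α} {n : ℕ}
    (hf : Function.Periodic f n) (hn : 0 < n) : ∃ j, ∀ i, f i ≤ f (j + 1) := by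
  obtain ⟨j, -, hj⟩ := (Finset.range n).exists_max_image f ⟨0, Finset.mem_range.mpr hn⟩
  refine ⟨j + n - 1, fun i => ?_⟩
  rw [Nat.sub_add_cancel (by omega), hf, ← hf.map_mod_nat i]
  exact hj _ (Finset.mem_range.mpr (i.mod_lt hn))

lemma Valuation.le_one_of_periodic_of_pow_three_eq {R Γ₀ : Type*} [Ring R]
    [LinearOrderedCommGroupWithZero Γ₀] (v : Valuation R Γ₀) {y : ℕ → R} {n : ℕ}
    (hy : Function.Periodic y n) (hn : 0 < n)
    (hrec : ∀ i, y (i + 1) ^ 3 = y i + y (i + 1) - y (i + 2)) (i : ℕ) : v (y i) ≤ 1 := by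
  obtain ⟨j, hj⟩ := (hy.comp v).exists_forall_le_succ hn
  set M := v (y (j + 1))
  have hM : M ^ 3 ≤ M := calc
    M ^ 3 = v (y j + y (j + 1) - y (j + 2)) := by rw [← map_pow, hrec]
    _ ≤ max (max (v (y j)) M) (v (y (j + 2))) :=
      (v.map_sub _ _).trans (max_le_max_right _ (v.map_add _ _))
    _ ≤ M := max_le (max_le (hj j) le_rfl) (hj (j + 2))
  refine (hj i).trans (not_lt.mp fun hM1 => not_lt.mpr hM ?_)
  simpa using pow_lt_pow_right₀ hM1 (by norm_num : 1 < 3)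

lemma gA_iterate_succ_fst (P : Qbar × Qbar) (i : ℕ) : (gA^[i + 1] P).1 = (gA^[i] P).2 := by
  rw [Function.iterate_succ_apply']
  rfl

lemma gA_iterate_snd_pow_three (P : Qbar × Qbar) (i : ℕ) :
    (gA^[i + 1] P).2 ^ 3 = (gA^[i] P).2 + (gA^[i + 1] P).2 - (gA^[i + 2] P).2 := by
  rw [Function.iterate_succ_apply' gA (i + 1), gA, gA_iterate_succ_fst]
  ring

/-- The coordinates of any `g`-periodic point of `ℚ̄²` are integral over `ℤ`. -/
theorem stmt4 (P : Qbar × Qbar) (hP : ∃ n, 1 ≤ n ∧ gA^[n] P = P) :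
    IsIntegral ℤ P.1 ∧ IsIntegral ℤ P.2 := by
  obtain ⟨n, hn, hper⟩ := hP
  have hperiodic : Function.Periodic (fun i => (gA^[i] P).2) n := fun i => by
    simp only [Function.iterate_add_apply, hper]
  have hint (i : ℕ) : IsIntegral ℤ (gA^[i] P).2 :=
    IsIntegral.of_forall_mem_valuationSubring fun V => (V.valuation_le_one_iff _).mp <|
      V.valuation.le_one_of_periodic_of_pow_three_eq hperiodic hn (gA_iterate_snd_pow_three P) i
  obtain ⟨m, rfl⟩ := Nat.exists_eq_add_of_le' hn
  refine ⟨?_, hint 0⟩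
  rw [← hper, gA_iterate_succ_fst]
  exact hint m
end

section
/- Let l ≥ 1 be an integer not divisible by 8, K a number field with ring of integers O_K, and 𝔭 ⊂ O_K a prime ideal lying over 3. If (x,y), (x',y') ∈ O_K² satisfy g^l(x,y) = (x,y) and g^l(x',y') = (x',y'), and x ≡ x' (mod 𝔭) and y ≡ y' (mod 𝔭), then x = x' and y = y'. In other words, the reduction-mod-𝔭 map from {(x,y) ∈ O_K² : g^l(x,y) = (x,y)} to (O_K/𝔭)² is injective. -/
/-!
Write `P ≡ Q` for coordinatewise congruence of pairs. If `3 ∈ 𝔭` and `P ≡ Q` modulo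
both `𝔭` and `I`, then `y³ - y'³ = (y - y')(3y'² + 3y'(y - y') + (y - y')²)` lies in `𝔭 I`, so
modulo `𝔭 I` the difference of the orbits of `P` and `Q` evolves by the Fibonacci matrix
`[[0, 1], [1, 1]]`. On a group killed by `3` that matrix satisfies `M⁴ = -1`, so a vector of
`l`-periodic differences is also `8`-periodic, hence `gcd l 8`-periodic, hence `4`-periodic
when `8 ∤ l`; then `-w = w` and `3w = 0` force `w = 0`. So `P ≡ Q` modulo every power of `𝔭`,
and Krull's intersection theorem gives `P = Q`.
-/

open NumberField

/-- The Hénon map `g(x,y) = (y, x + y - y³)`, over an arbitrary commutative ring. -/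
def gR {R : Type*} [CommRing R] (P : R × R) : R × R :=
  (P.2, P.1 + P.2 - P.2 ^ 3)

open Function

section FibStep

variable {M : Type*} [AddCommGroup M]

def fibStep (v : M × M) : M × M :=
  (v.2, v.1 + v.2)

lemma fibStep_iterate_four_of_three_nsmul {w : M × M} (h3 : 3 • w = 0) :
    fibStep^[4] w = -w := by
  obtain ⟨a, b⟩ := w
  obtain ⟨ha, hb⟩ := Prod.ext_iff.1 h3
  simp only [Prod.smul_fst, Prod.smul_snd, Prod.fst_zero, Prod.snd_zero] at ha hb
  ext
  · simp only [iterate_succ, comp_apply, iterate_zero, id_eq, fibStep, Prod.fst_neg]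
    linear_combination (norm := module) ha + hb
  · simp only [iterate_succ, comp_apply, iterate_zero, id_eq, fibStep, Prod.snd_neg]
    linear_combination (norm := module) ha + 2 • hb

lemma Nat.gcd_eight_dvd_four_of_not_dvd {l : ℕ} (h8 : ¬ 8 ∣ l) : Nat.gcd l 8 ∣ 4 := by
  have hdvd : Nat.gcd l 8 ∣ 2 ^ 3 := Nat.gcd_dvd_right l 8
  obtain ⟨k, hk, hgcd⟩ := (Nat.dvd_prime_pow Nat.prime_two).1 hdvd
  have hk3 : k ≠ 3 := by
    rintro rfl
    apply h8
    simpa [hgcd] using Nat.gcd_dvd_left l 8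
  rw [hgcd]
  exact Nat.pow_dvd_pow 2 (by omega : k ≤ 2)

lemma eq_zero_of_isPeriodicPt_fibStep {w : M × M} {l : ℕ} (h3 : 3 • w = 0) (h8 : ¬ 8 ∣ l)
    (hw : IsPeriodicPt fibStep l w) : w = 0 := by
  have h3_neg : 3 • -w = 0 := by rw [smul_neg, h3, neg_zero]
  have h8w : IsPeriodicPt fibStep 8 w := by
    show fibStep^[4 + 4] w = w
    rw [iterate_add_apply, fibStep_iterate_four_of_three_nsmul h3,
      fibStep_iterate_four_of_three_nsmul h3_neg, neg_neg]
  obtain ⟨k, hk⟩ := Nat.gcd_eight_dvd_four_of_not_dvd h8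
  have h4w : IsPeriodicPt fibStep 4 w := hk ▸ (hw.gcd h8w).mul_const k
  have hneg : -w = w := (fibStep_iterate_four_of_three_nsmul h3).symm.trans h4w
  linear_combination (norm := module) h3 + hneg

end FibStep

section Reduction

variable {R S : Type*} [CommRing R] [CommRing S]

abbrev pairMk (I : Ideal R) : R × R →+* (R ⧸ I) × (R ⧸ I) :=
  (Ideal.Quotient.mk I).prodMap (Ideal.Quotient.mk I)

@[simp]
lemma pairMk_apply (I : Ideal R) (P : R × R) :
    pairMk I P = (Ideal.Quotient.mk I P.1, Ideal.Quotient.mk I P.2) :=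
  rfl

lemma pairMk_eq_iff {I : Ideal R} {P Q : R × R} :
    pairMk I P = pairMk I Q ↔ P.1 - Q.1 ∈ I ∧ P.2 - Q.2 ∈ I := by
  simp only [pairMk_apply, Prod.ext_iff, Ideal.Quotient.eq]

lemma gR_iterate_prodMap (f : R →+* S) (k : ℕ) (P : R × R) :
    f.prodMap f (gR^[k] P) = gR^[k] (f.prodMap f P) :=
  Semiconj.iterate_right (f := f.prodMap f) (fun _ => by simp [gR]) k P

lemma pow_three_sub_pow_three_mem {𝔭 I : Ideal R} (h3 : (3 : R) ∈ 𝔭) {x y : R}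
    (h𝔭 : x - y ∈ 𝔭) (hI : x - y ∈ I) : x ^ 3 - y ^ 3 ∈ 𝔭 * I := by
  have hs : 3 * y ^ 2 + 3 * y * (x - y) + (x - y) * (x - y) ∈ 𝔭 :=
    add_mem (add_mem (𝔭.mul_mem_right _ h3) (𝔭.mul_mem_left _ h𝔭)) (𝔭.mul_mem_left _ h𝔭)
  have hfactor : x ^ 3 - y ^ 3 = (3 * y ^ 2 + 3 * y * (x - y) + (x - y) * (x - y)) * (x - y) := by
    ring
  rw [hfactor]
  exact Ideal.mul_mem_mul hs hI

variable {𝔭 I : Ideal R} {P Q : R × R}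

lemma pairMk_mul_gR_sub (h3 : (3 : R) ∈ 𝔭) (h𝔭 : pairMk 𝔭 P = pairMk 𝔭 Q)
    (hI : pairMk I P = pairMk I Q) :
    pairMk (𝔭 * I) (gR P) - pairMk (𝔭 * I) (gR Q) =
      fibStep (pairMk (𝔭 * I) P - pairMk (𝔭 * I) Q) := by
  have hcube : Ideal.Quotient.mk (𝔭 * I) (P.2 ^ 3) = Ideal.Quotient.mk (𝔭 * I) (Q.2 ^ 3) :=
    Ideal.Quotient.eq.2 <|
      pow_three_sub_pow_three_mem h3 (pairMk_eq_iff.1 h𝔭).2 (pairMk_eq_iff.1 hI).2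
  ext
  · rfl
  · simp only [gR, fibStep, pairMk_apply, Prod.snd_sub, Prod.fst_sub, map_sub, map_add, hcube]
    ring

lemma pairMk_mul_gR_iterate_sub (h3 : (3 : R) ∈ 𝔭) (h𝔭 : pairMk 𝔭 P = pairMk 𝔭 Q)
    (hI : pairMk I P = pairMk I Q) (k : ℕ) :
    pairMk (𝔭 * I) (gR^[k] P) - pairMk (𝔭 * I) (gR^[k] Q) =
      fibStep^[k] (pairMk (𝔭 * I) P - pairMk (𝔭 * I) Q) := by
  induction k with
  | zero => rfl
  | succ k ih =>
    have hcongr : ∀ J : Ideal R, pairMk J P = pairMk J Q →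
        pairMk J (gR^[k] P) = pairMk J (gR^[k] Q) := fun J hJ => by
      rw [gR_iterate_prodMap, gR_iterate_prodMap, hJ]
    rw [iterate_succ_apply', iterate_succ_apply', iterate_succ_apply', ← ih,
      pairMk_mul_gR_sub h3 (hcongr 𝔭 h𝔭) (hcongr I hI)]

lemma three_nsmul_pairMk_mul_sub (h3 : (3 : R) ∈ 𝔭) (hI : pairMk I P = pairMk I Q) :
    3 • (pairMk (𝔭 * I) P - pairMk (𝔭 * I) Q) = 0 := by
  have hmem : ∀ x : R, x ∈ I → 3 • Ideal.Quotient.mk (𝔭 * I) x = 0 := fun x hx => by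
    rw [← map_nsmul, Ideal.Quotient.eq_zero_iff_mem, nsmul_eq_mul, Nat.cast_ofNat]
    exact Ideal.mul_mem_mul h3 hx
  obtain ⟨h1, h2⟩ := pairMk_eq_iff.1 hI
  ext
  · simpa using hmem _ h1
  · simpa using hmem _ h2

lemma pairMk_mul_eq_of_isPeriodicPt {l : ℕ} (h3 : (3 : R) ∈ 𝔭) (h8 : ¬ 8 ∣ l)
    (hP : IsPeriodicPt gR l P) (hQ : IsPeriodicPt gR l Q) (h𝔭 : pairMk 𝔭 P = pairMk 𝔭 Q)
    (hI : pairMk I P = pairMk I Q) : pairMk (𝔭 * I) P = pairMk (𝔭 * I) Q := by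
  have hw : IsPeriodicPt fibStep l (pairMk (𝔭 * I) P - pairMk (𝔭 * I) Q) := by
    rw [IsPeriodicPt, IsFixedPt, ← pairMk_mul_gR_iterate_sub h3 h𝔭 hI, hP.eq, hQ.eq]
  exact sub_eq_zero.1 <|
    eq_zero_of_isPeriodicPt_fibStep (three_nsmul_pairMk_mul_sub h3 hI) h8 hw

lemma eq_of_forall_pairMk_pow_eq [IsNoetherianRing R] [IsDomain R] (h𝔭 : 𝔭 ≠ ⊤)
    (h : ∀ n, pairMk (𝔭 ^ n) P = pairMk (𝔭 ^ n) Q) : P = Q := by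
  have hzero : ∀ x : R, (∀ n, x ∈ 𝔭 ^ n) → x = 0 := fun x hx => by
    simpa [Ideal.iInf_pow_eq_bot_of_isDomain 𝔭 h𝔭] using Ideal.mem_iInf.2 hx
  exact Prod.ext (sub_eq_zero.1 <| hzero _ fun n => (pairMk_eq_iff.1 (h n)).1)
    (sub_eq_zero.1 <| hzero _ fun n => (pairMk_eq_iff.1 (h n)).2)

theorem eq_of_isPeriodicPt_gR_of_pairMk_eq [IsNoetherianRing R] [IsDomain R] {l : ℕ}
    (h8 : ¬ 8 ∣ l) (h𝔭 : 𝔭 ≠ ⊤) (h3 : (3 : R) ∈ 𝔭) (hP : IsPeriodicPt gR l P)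
    (hQ : IsPeriodicPt gR l Q) (hPQ : pairMk 𝔭 P = pairMk 𝔭 Q) : P = Q := by
  refine eq_of_forall_pairMk_pow_eq h𝔭 fun n => ?_
  induction n with
  | zero => exact pairMk_eq_iff.2 (by simp)
  | succ n ih => rw [pow_succ']; exact pairMk_mul_eq_of_isPeriodicPt h3 h8 hP hQ hPQ ih

end Reduction

theorem stmt6_general (l : ℕ) (h8 : ¬ (8 ∣ l))
    (K : Type*) [Field K] [NumberField K]
    (𝔭 : Ideal (𝓞 K)) (hprime : 𝔭.IsPrime) (h3 : (3 : 𝓞 K) ∈ 𝔭)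
    (P Q : 𝓞 K × 𝓞 K) (hP : gR^[l] P = P) (hQ : gR^[l] Q = Q)
    (hx : P.1 - Q.1 ∈ 𝔭) (hy : P.2 - Q.2 ∈ 𝔭) :
    P = Q :=
  eq_of_isPeriodicPt_gR_of_pairMk_eq h8 hprime.ne_top h3 hP hQ (pairMk_eq_iff.2 ⟨hx, hy⟩)

/-- For `l ≥ 1` not divisible by `8`, `K` a number field, `𝔭 ⊂ O_K` a prime ideal lying
over `3`, the reduction map modulo `𝔭` is injective on the set of points of `O_K²` fixed
by `g^l`. -/
theorem stmt6 (l : ℕ) (hl : 1 ≤ l) (h8 : ¬ (8 ∣ l))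
    (K : Type*) [Field K] [NumberField K]
    (𝔭 : Ideal (𝓞 K)) (hprime : 𝔭.IsPrime) (h3 : (3 : 𝓞 K) ∈ 𝔭)
    (P Q : 𝓞 K × 𝓞 K) (hP : gR^[l] P = P) (hQ : gR^[l] Q = Q)
    (hx : P.1 - Q.1 ∈ 𝔭) (hy : P.2 - Q.2 ∈ 𝔭) :
    P = Q :=
  stmt6_general l h8 K 𝔭 hprime h3 P Q hP hQ hx hy
end

section
/- Let r ≥ 0 be an integer, m = 3^r and n = 2m. Let K be a number field with ring of integers O_K, let (x₀,y₀) ∈ O_K² satisfy g^n(x₀,y₀) = (x₀,y₀), let 𝔭 ⊂ O_K be a prime ideal lying over 3, and let x̄₀, ȳ₀ denote the images of x₀, y₀ in the residue field O_K/𝔭. Then x̄₀^{3^m} = x̄₀ and ȳ₀^{3^m} = ȳ₀; in particular, the subfield of O_K/𝔭 generated over the prime field 𝔽₃ by x̄₀ and ȳ₀ has degree at most m over 𝔽₃. -/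
open NumberField

namespace Stmt7Aux

variable {R : Type*} [CommRing R]

/-- The inverse Hénon map. -/
def hRm (P : R × R) : R × R := (P.2 - P.1 + P.1 ^ 3, P.1)

/-- The coordinatewise cube map. -/
def cubeM (P : R × R) : R × R := (P.1 ^ 3, P.2 ^ 3)

lemma gR_hR (P : R × R) : gR (hRm P) = P := by
  simp only [hRm, gR]
  ext <;> simp <;> ring

lemma hR_gR (P : R × R) : hRm (gR P) = P := by
  simp only [hRm, gR]
  ext <;> simp <;> ring

lemma iter_gR_hR (n : ℕ) (P : R × R) : gR^[n] (hRm^[n] P) = P := by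
  induction n generalizing P with
  | zero => simp
  | succ n ih =>
    rw [Function.iterate_succ_apply, Function.iterate_succ_apply', gR_hR, ih]

lemma iter_hR_gR (n : ℕ) (P : R × R) : hRm^[n] (gR^[n] P) = P := by
  induction n generalizing P with
  | zero => simp
  | succ n ih =>
    rw [Function.iterate_succ_apply, Function.iterate_succ_apply', hR_gR, ih]

lemma cubeM_iter (n : ℕ) (Q : R × R) : cubeM^[n] Q = (Q.1 ^ 3 ^ n, Q.2 ^ 3 ^ n) := by
  induction n generalizing Q with
  | zero => simp
  | succ n ih =>
    rw [Function.iterate_succ_apply, ih]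
    simp only [cubeM, ← pow_mul, pow_succ]
    ring_nf

section Char3

variable (h3 : (3 : R) = 0)
include h3

lemma gR_add (P Q : R × R) : gR (P + Q) = gR P + gR Q := by
  ext <;> simp [gR]
  linear_combination (-(P.2 ^ 2 * Q.2) - P.2 * Q.2 ^ 2) * h3

lemma hRm_add (P Q : R × R) : hRm (P + Q) = hRm P + hRm Q := by
  ext <;> simp [hRm]
  linear_combination (P.1 ^ 2 * Q.1 + P.1 * Q.1 ^ 2) * h3

omit h3 in
lemma iter_add {f : R × R → R × R} (hf : ∀ A B, f (A + B) = f A + f B) :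
    ∀ (n : ℕ) (A B : R × R), f^[n] (A + B) = f^[n] A + f^[n] B := by
  intro n
  induction n with
  | zero => simp
  | succ n ih =>
    intro A B
    rw [Function.iterate_succ_apply', Function.iterate_succ_apply',
      Function.iterate_succ_apply', ih, hf]

omit h3 in
lemma map_sub' {f : R × R → R × R} (hf : ∀ A B, f (A + B) = f A + f B)
    (A B : R × R) : f (A - B) = f A - f B := by
  have h := hf (A - B) B
  rw [sub_add_cancel] at h
  rw [h]; abel

omit h3 in
lemma map_comb {f : R × R → R × R} (hf : ∀ A B, f (A + B) = f A + f B)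
    (A B C : R × R) : f (A - B + C) = f A - f B + f C := by
  rw [hf, map_sub' hf]

lemma three_smul_zero (v : R × R) : v + v + v = 0 := by
  ext <;> simp <;> [linear_combination v.1 * h3; linear_combination v.2 * h3]

/-- The key identity: in characteristic 3,
`Frob^[3^r] = id - g^[3^r] + g⁻¹^[3^r]` as maps on `R × R`. -/
lemma key : ∀ (r : ℕ) (P : R × R),
    cubeM^[3 ^ r] P = P - gR^[3 ^ r] P + hRm^[3 ^ r] P := by
  intro r
  induction r with
  | zero =>
    intro P
    simp only [pow_zero, Function.iterate_one]
    ext <;> simp [cubeM, gR, hRm] <;> ring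
  | succ r IH =>
    intro P
    have hmul : (3 : ℕ) ^ (r + 1) = 3 ^ r * 3 := pow_succ 3 r
    rw [hmul, Function.iterate_mul, Function.iterate_mul, Function.iterate_mul]
    set G : R × R → R × R := gR^[3 ^ r] with hG
    set H : R × R → R × R := hRm^[3 ^ r] with hH
    set C : R × R → R × R := cubeM^[3 ^ r] with hC
    have hGadd : ∀ A B, G (A + B) = G A + G B := iter_add (gR_add h3) _
    have hHadd : ∀ A B, H (A + B) = H A + H B := iter_add (hRm_add h3) _
    have hGH : ∀ A, G (H A) = A := fun A => iter_gR_hR _ A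
    have hHG : ∀ A, H (G A) = A := fun A => iter_hR_gR _ A
    show C (C (C P)) = P - G (G (G P)) + H (H (H P))
    have e1 : C P = P - G P + H P := IH P
    have e2 : C (C P) = (P - G P + H P) - (G P - G (G P) + P) + (H P - P + H (H P)) := by
      rw [IH (C P), e1, map_comb hGadd, map_comb hHadd, hGH, hHG]
    have e3 : C (C (C P)) =
        ((P - G P + H P) - (G P - G (G P) + P) + (H P - P + H (H P)))
        - ((G P - G (G P) + P) - (G (G P) - G (G (G P)) + G P) + (P - G P + H P))
        + ((H P - P + H (H P)) - (P - G P + H P) + (H (H P) - H P + H (H (H P)))) := by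
      rw [IH (C (C P)), e2]
      simp only [map_comb hGadd, map_comb hHadd, hGH, hHG]
    rw [e3, show ((P - G P + H P) - (G P - G (G P) + P) + (H P - P + H (H P)))
        - ((G P - G (G P) + P) - (G (G P) - G (G (G P)) + G P) + (P - G P + H P))
        + ((H P - P + H (H P)) - (P - G P + H P) + (H (H P) - H P + H (H (H P))))
        = (P - G (G (G P)) + H (H (H P)))
          + ((G (G P) + H (H P) - P - P) + (G (G P) + H (H P) - P - P)
            + (G (G P) + H (H P) - P - P)) from by abel,
      three_smul_zero h3 (G (G P) + H (H P) - P - P), add_zero]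

end Char3
end Stmt7Aux

set_option synthInstance.maxHeartbeats 1000000 in
set_option maxHeartbeats 1000000 in
open Stmt7Aux in
/-- Let `m = 3^r`, `n = 2m`, `K` a number field, `(x₀,y₀) ∈ O_K²` a fixed point of `g^n`,
and `𝔭 ⊂ O_K` a prime ideal over `3`.  Then the residues `x̄₀, ȳ₀ ∈ O_K/𝔭` satisfy
`x̄₀^(3^m) = x̄₀` and `ȳ₀^(3^m) = ȳ₀`; in particular they lie in the subfield with `3^m`
elements, so the subfield of `O_K/𝔭` they generate has degree at most `m` over `𝔽₃`. -/
theorem stmt7 (r : ℕ) (K : Type*) [Field K] [NumberField K]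
    (𝔭 : Ideal (𝓞 K)) (hprime : 𝔭.IsPrime) (h3 : (3 : 𝓞 K) ∈ 𝔭)
    (P : 𝓞 K × 𝓞 K) (hP : gR^[2 * 3 ^ r] P = P) :
    (Ideal.Quotient.mk 𝔭 P.1) ^ (3 ^ (3 ^ r)) = Ideal.Quotient.mk 𝔭 P.1 ∧
    (Ideal.Quotient.mk 𝔭 P.2) ^ (3 ^ (3 ^ r)) = Ideal.Quotient.mk 𝔭 P.2 := by
  set π : 𝓞 K →+* 𝓞 K ⧸ 𝔭 := Ideal.Quotient.mk 𝔭 with hπ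
  have h3R : (3 : 𝓞 K ⧸ 𝔭) = 0 := by
    have h := Ideal.Quotient.eq_zero_iff_mem.mpr h3
    rw [← map_ofNat π 3]
    exact h
  set Pi2 : 𝓞 K × 𝓞 K → (𝓞 K ⧸ 𝔭) × (𝓞 K ⧸ 𝔭) := fun Q => (π Q.1, π Q.2) with hPi2
  have hcomm : ∀ Q, Pi2 (gR Q) = gR (Pi2 Q) := by
    intro Q
    simp [gR, hPi2, map_add, map_sub, map_pow]
  have hiter : ∀ (n : ℕ) (Q), Pi2 (gR^[n] Q) = gR^[n] (Pi2 Q) := by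
    intro n
    induction n with
    | zero => simp
    | succ n ih =>
      intro Q
      rw [Function.iterate_succ_apply, Function.iterate_succ_apply, ih, hcomm]
  have hfix : gR^[3 ^ r] (gR^[3 ^ r] (Pi2 P)) = Pi2 P := by
    rw [← Function.iterate_add_apply, ← two_mul, ← hiter, hP]
  have hHeq : hRm^[3 ^ r] (Pi2 P) = gR^[3 ^ r] (Pi2 P) := by
    conv_lhs => rw [← hfix]
    exact iter_hR_gR _ _
  have hc := key h3R r (Pi2 P)
  rw [hHeq, sub_add_cancel, cubeM_iter] at hc
  have h1 := congrArg Prod.fst hc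
  have h2 := congrArg Prod.snd hc
  exact ⟨h1, h2⟩
end

section
/- Let r ≥ 0 be an integer, m = 3^r and n = 2m. Let K be a number field with ring of integers O_K and let 𝔭 ⊂ O_K be a prime ideal lying over 3 whose residue field 𝔽_𝔭 = O_K/𝔭 has degree exactly m over 𝔽₃. Let (x₀,y₀) ∈ O_K² satisfy g^n(x₀,y₀) = (x₀,y₀), write (x_i,y_i) := g^i(x₀,y₀) for 0 ≤ i ≤ n−1 (these lie in O_K), and set ζ := Σ_{i=0}^{n−1} 2^{n−1−i} y_i ∈ O_K. Then the image ζ̄ of ζ in 𝔽_𝔭 satisfies ζ̄ = Σ_{i=0}^{n−1} (−1)^{n−1−i} ȳ_i = Tr_{𝔽_𝔭/𝔽₃}(x̄₀ − ȳ₀), where bars denote images in 𝔽_𝔭 and Tr_{𝔽_𝔭/𝔽₃} is the field trace of 𝔽_𝔭 over 𝔽₃. -/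
/-!
Reduced mod `𝔭`, the orbit satisfies `ȳᵢ³ = ȳᵢ₋₁ + ȳᵢ - ȳᵢ₊₁` with indices mod `n`, and `2 ≡ -1`.
Pair polynomials with the sequence through `Xⁱ ↦ ȳᵢ`: since Frobenius is `𝔽₃`-linear, cubing the
pairing of `p` is the pairing of `T p` with `T = X⁻¹ + 1 - X` in `𝔽₃[X]/(Xⁿ - 1)`. Hence
`Tr(x̄₀ - ȳ₀) = ∑_{j<m} (ȳ_{-1} - ȳ₀)^{3^j}` is the pairing of `(∑_{j<m} Tʲ)(X⁻¹ - 1)`, and in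
characteristic 3 with `m = 3^r` we have `∑_{j<m} Tʲ = (T - 1)^{m-1}`, `(1 - X)^m = 1 - X^m` and
`(1 + X)^{m-1} = ∑_{i<m} (-X)^i`, which turn that product into `∑_{i<n} (-1)^{i+1} Xⁱ`.
-/

open NumberField

open Polynomial Finset

theorem geom_sum_prime_pow_eq_sub_one_pow {R : Type*} [CommRing R] {p : ℕ} [Fact p.Prime]
    [CharP R p] (r : ℕ) (z : R) : ∑ j ∈ range (p ^ r), z ^ j = (z - 1) ^ (p ^ r - 1) := by
  have hX : (X - 1 : (ZMod p)[X]) ≠ 0 := X_sub_C_ne_zero 1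
  have hpoly : ∑ j ∈ range (p ^ r), (X : (ZMod p)[X]) ^ j = (X - 1) ^ (p ^ r - 1) := by
    refine mul_left_cancel₀ hX ?_
    rw [mul_geom_sum, ← pow_succ',
      Nat.sub_add_cancel (Nat.one_le_pow _ _ (Fact.out : p.Prime).pos), sub_pow_char_pow, one_pow]
  simpa [eval₂_pow] using congrArg (eval₂RingHom (ZMod.castHom dvd_rfl R) z) hpoly

theorem geom_sum_add_one_sub_mul_sub_one {R : Type*} [CommRing R] [CharP R 3] (r : ℕ) {x y : R}
    (hxy : x * y = 1) (hx : x ^ (2 * 3 ^ r) = 1) :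
    (∑ j ∈ range (3 ^ r), (y + 1 - x) ^ j) * (y - 1) =
      ∑ i ∈ range (2 * 3 ^ r), (-1) ^ (i + 1) * x ^ i := by
  obtain ⟨k, hk⟩ : ∃ k, 3 ^ r = k + 1 := Nat.exists_eq_add_one.mpr (by positivity)
  have hodd : Odd (3 ^ r) := Odd.pow (by decide)
  have hym : y ^ 3 ^ r = x ^ 3 ^ r := by
    calc y ^ 3 ^ r = y ^ 3 ^ r * x ^ (2 * 3 ^ r) := by rw [hx, mul_one]
      _ = (x * y) ^ 3 ^ r * x ^ 3 ^ r := by ring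
      _ = x ^ 3 ^ r := by rw [hxy, one_pow, one_mul]
  have hT : ∑ j ∈ range (3 ^ r), (y + 1 - x) ^ j = (y - x) ^ (3 ^ r - 1) := by
    rw [geom_sum_prime_pow_eq_sub_one_pow, add_sub_right_comm, add_sub_cancel_right]
  have hD : (1 + x) ^ (3 ^ r - 1) = ∑ i ∈ range (3 ^ r), (-x) ^ i := by
    rw [geom_sum_prime_pow_eq_sub_one_pow, show -x - 1 = -(1 + x) by ring,
      Even.neg_pow (Nat.Odd.sub_odd hodd odd_one)]
  calc (∑ j ∈ range (3 ^ r), (y + 1 - x) ^ j) * (y - 1)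
      = y ^ 3 ^ r * (1 - x) ^ 3 ^ r * (1 + x) ^ (3 ^ r - 1) := by
        rw [hT, show y - x = y * (1 - x) * (1 + x) by linear_combination x * hxy,
          show y - 1 = y * (1 - x) by linear_combination hxy, hk, Nat.add_sub_cancel, mul_pow,
          mul_pow]
        ring
    _ = (x ^ 3 ^ r - 1) * ∑ i ∈ range (3 ^ r), (-x) ^ i := by
        rw [sub_pow_char_pow, one_pow, hD, mul_sub, mul_one, ← mul_pow, mul_comm y x, hxy, one_pow,
          hym]
    _ = ∑ i ∈ range (2 * 3 ^ r), (-1) ^ (i + 1) * x ^ i := by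
        rw [two_mul, sum_range_add, sub_mul, one_mul, mul_sum, sub_eq_add_neg, ← sum_neg_distrib,
          add_comm]
        congr 1 <;> refine sum_congr rfl fun i _ => ?_
        · rw [neg_pow, pow_succ]; ring
        · rw [neg_pow, pow_add, pow_add, pow_succ, hodd.neg_one_pow]; ring

section SeqPairing

variable {k M : Type*}

def seqPairing [Semiring k] [AddCommMonoid M] [Module k M] (a : ℕ → M) : k[X] →ₗ[k] M :=
  lsum fun i => LinearMap.toSpanSingleton k M (a i)

section Semiring
variable [Semiring k] [AddCommMonoid M] [Module k M] (a : ℕ → M)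

@[simp]
theorem seqPairing_monomial (i : ℕ) (c : k) : seqPairing a (monomial i c) = c • a i := by
  simp [seqPairing, sum_monomial_index]

@[simp]
theorem seqPairing_X_pow (i : ℕ) : seqPairing a (X ^ i : k[X]) = a i := by
  simp [← monomial_one_right_eq_X_pow]

@[simp]
theorem seqPairing_one : seqPairing a (1 : k[X]) = a 0 := by
  simpa using seqPairing_X_pow a 0

theorem seqPairing_C_mul_X_pow (i : ℕ) (c : k) : seqPairing a (C c * X ^ i) = c • a i := by
  simp [C_mul_X_pow_eq_monomial]

end Semiring

theorem seqPairing_X_pow_mul [CommSemiring k] [AddCommMonoid M] [Module k M] {a : ℕ → M} {n : ℕ}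
    (ha : ∀ i, a (i + n) = a i) (p : k[X]) : seqPairing a (X ^ n * p) = seqPairing a p := by
  suffices seqPairing a ∘ₗ LinearMap.mulLeft k (X ^ n) = seqPairing a from
    LinearMap.congr_fun this p
  refine lhom_ext' fun i => LinearMap.ext_ring ?_
  simp [← monomial_one_right_eq_X_pow, monomial_mul_monomial, add_comm n, ha]

theorem seqPairing_eq_of_dvd [CommRing k] [AddCommGroup M] [Module k M] {a : ℕ → M} {n : ℕ}
    (ha : ∀ i, a (i + n) = a i) {p q : k[X]} (hpq : X ^ n - 1 ∣ p - q) :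
    seqPairing a p = seqPairing a q := by
  obtain ⟨s, hs⟩ := hpq
  rw [eq_add_of_sub_eq hs, map_add, sub_one_mul, map_sub, seqPairing_X_pow_mul ha, sub_self,
    zero_add]

theorem seqPairing_pow_card [Field k] [Fintype k] [CommRing M] [Algebra k M] {a : ℕ → M}
    {T : k[X]} (ha : ∀ i, a i ^ Fintype.card k = seqPairing a (T * X ^ i)) (p : k[X]) :
    seqPairing a p ^ Fintype.card k = seqPairing a (T * p) := by
  suffices (FiniteField.frobeniusAlgHom k M).toLinearMap ∘ₗ seqPairing a =
      seqPairing a ∘ₗ LinearMap.mulLeft k T from LinearMap.congr_fun this p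
  refine lhom_ext' fun i => LinearMap.ext_ring ?_
  simp [monomial_one_right_eq_X_pow, ha]

theorem seqPairing_pow_card_pow [Field k] [Fintype k] [CommRing M] [Algebra k M] {a : ℕ → M}
    {T : k[X]} (ha : ∀ i, a i ^ Fintype.card k = seqPairing a (T * X ^ i)) (j : ℕ) (p : k[X]) :
    seqPairing a p ^ Fintype.card k ^ j = seqPairing a (T ^ j * p) := by
  induction j with
  | zero => simp
  | succ j ih => rw [pow_succ, pow_mul, ih, seqPairing_pow_card ha, pow_succ', mul_assoc]

theorem seqPairing_neg_one_pow_mul_X_pow [CommRing k] [Ring M] [Algebra k M] (a : ℕ → M)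
    (m i : ℕ) : seqPairing a ((-1) ^ m * X ^ i : k[X]) = (-1) ^ m * a i := by
  rw [show (-1 : k[X]) ^ m = C ((-1) ^ m) by simp, seqPairing_C_mul_X_pow,
    Algebra.smul_def, map_pow, map_neg, map_one]

end SeqPairing

theorem X_pow_sub_one_dvd_geom_sum_mul_sub_alternating_sum (r : ℕ) :
    (X ^ (2 * 3 ^ r) - 1 : (ZMod 3)[X]) ∣
      (∑ j ∈ range (3 ^ r), (X ^ (2 * 3 ^ r - 1) + 1 - X) ^ j) * (X ^ (2 * 3 ^ r - 1) - 1) -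
        ∑ i ∈ range (2 * 3 ^ r), (-1) ^ (i + 1) * X ^ i := by
  set f : (ZMod 3)[X] := X ^ (2 * 3 ^ r) - 1 with hf
  have hn : 0 < 2 * 3 ^ r := by positivity
  have : Nontrivial (AdjoinRoot f) := AdjoinRoot.nontrivial f <| by
    rw [hf, ← C_1, degree_X_pow_sub_C hn]
    exact_mod_cast hn.ne'
  have : CharP (AdjoinRoot f) 3 := charP_of_injective_algebraMap' (ZMod 3) 3
  have hx : AdjoinRoot.root f ^ (2 * 3 ^ r) = 1 := by
    have h := AdjoinRoot.mk_self (f := f)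
    rwa [map_sub, map_pow, AdjoinRoot.mk_X, map_one, sub_eq_zero] at h
  have hxy : AdjoinRoot.root f * AdjoinRoot.root f ^ (2 * 3 ^ r - 1) = 1 := by
    rw [← pow_succ', Nat.sub_add_cancel hn, hx]
  rw [← AdjoinRoot.mk_eq_mk]
  simpa [map_sum, add_comm _ (1 : AdjoinRoot f)] using geom_sum_add_one_sub_mul_sub_one r hxy hx

theorem alternating_sum_eq_trace_of_cube_recurrence {F : Type*} [Field F] [Finite F]
    [Algebra (ZMod 3) F] (r : ℕ) (hF : Module.finrank (ZMod 3) F = 3 ^ r) {a : ℕ → F}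
    (hper : ∀ i, a (i + 2 * 3 ^ r) = a i)
    (hcube : ∀ i, a i ^ 3 = a (i + (2 * 3 ^ r - 1)) + a i - a (i + 1)) :
    ∑ i ∈ range (2 * 3 ^ r), (-1) ^ (i + 1) * a i =
      algebraMap (ZMod 3) F (Algebra.trace (ZMod 3) F (a (2 * 3 ^ r - 1) - a 0)) := by
  let T : (ZMod 3)[X] := X ^ (2 * 3 ^ r - 1) + 1 - X
  have hT (i : ℕ) : a i ^ Fintype.card (ZMod 3) = seqPairing a (T * X ^ i) := by
    simp [T, ZMod.card, add_mul, sub_mul, ← pow_add, ← pow_succ', hcube, add_comm]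
  have hfrob (j : ℕ) (p : (ZMod 3)[X]) : seqPairing a p ^ 3 ^ j = seqPairing a (T ^ j * p) := by
    simpa only [ZMod.card] using seqPairing_pow_card_pow hT j p
  have hcong := seqPairing_eq_of_dvd hper
    (X_pow_sub_one_dvd_geom_sum_mul_sub_alternating_sum r)
  rw [FiniteField.algebraMap_trace_eq_sum_pow, hF, Nat.card_zmod]
  calc ∑ i ∈ range (2 * 3 ^ r), (-1) ^ (i + 1) * a i
      = seqPairing a (∑ i ∈ range (2 * 3 ^ r), (-1) ^ (i + 1) * X ^ i : (ZMod 3)[X]) := by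
        simp only [map_sum, seqPairing_neg_one_pow_mul_X_pow]
    _ = ∑ j ∈ range (3 ^ r), (a (2 * 3 ^ r - 1) - a 0) ^ 3 ^ j := by
        rw [← hcong, sum_mul, map_sum]
        refine sum_congr rfl fun j _ => ?_
        rw [← hfrob, map_sub, seqPairing_X_pow, seqPairing_one]

theorem gR_iterate_succ {R : Type*} [CommRing R] (P : R × R) (i : ℕ) :
    gR^[i + 1] P = ((gR^[i] P).2, (gR^[i] P).1 + (gR^[i] P).2 - (gR^[i] P).2 ^ 3) :=
  Function.iterate_succ_apply' gR i P

section PeriodicOrbit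

variable {R : Type*} [CommRing R] {n : ℕ} {P : R × R}

theorem gR_iterate_add_period (hP : gR^[n] P = P) (i : ℕ) : gR^[i + n] P = gR^[i] P := by
  rw [Function.iterate_add_apply, hP]

theorem gR_iterate_fst_of_periodic (hn : 0 < n) (hP : gR^[n] P = P) (i : ℕ) :
    (gR^[i] P).1 = (gR^[i + (n - 1)] P).2 := by
  rw [← gR_iterate_add_period hP i, show i + n = i + (n - 1) + 1 by omega, gR_iterate_succ]

theorem gR_iterate_snd_cube_of_periodic (hn : 0 < n) (hP : gR^[n] P = P) (i : ℕ) :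
    (gR^[i] P).2 ^ 3 = (gR^[i + (n - 1)] P).2 + (gR^[i] P).2 - (gR^[i + 1] P).2 := by
  rw [gR_iterate_succ, ← gR_iterate_fst_of_periodic hn hP]
  ring

end PeriodicOrbit

theorem neg_one_pow_sub_one_sub {R : Type*} [Ring R] {n i : ℕ} (hn : Even n) (hi : i < n) :
    (-1 : R) ^ (n - 1 - i) = (-1) ^ (i + 1) := by
  obtain ⟨k, rfl⟩ := hn
  rw [neg_one_pow_eq_pow_mod_two, neg_one_pow_eq_pow_mod_two (i + 1)]
  congr 1
  omega

/-- Let `m = 3^r`, `n = 2m`, `K` a number field, `𝔭 ⊂ O_K` a prime over `3` whose residue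
field `𝔽_𝔭 = O_K/𝔭` has exactly `3^m` elements (degree `m` over `𝔽₃`), and `(x₀,y₀) ∈ O_K²`
a fixed point of `g^n`.  Set `ζ = Σ_{i=0}^{n-1} 2^{n-1-i} y_i` where `(x_i,y_i) = g^i(x₀,y₀)`.
Then `ζ̄ = Σ_{i=0}^{n-1} (-1)^{n-1-i} ȳ_i = Tr_{𝔽_𝔭/𝔽₃}(x̄₀ - ȳ₀)` in `𝔽_𝔭`
(the trace being taken for any `𝔽₃ = ZMod 3`-algebra structure on `𝔽_𝔭`; such a structure
exists and is unique since `3 ∈ 𝔭`). -/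
theorem stmt10 (r : ℕ) (K : Type*) [Field K] [NumberField K]
    (𝔭 : Ideal (𝓞 K)) (hprime : 𝔭.IsPrime) (h3 : (3 : 𝓞 K) ∈ 𝔭)
    (hcard : Nat.card (𝓞 K ⧸ 𝔭) = 3 ^ (3 ^ r))
    (P : 𝓞 K × 𝓞 K) (hP : gR^[2 * 3 ^ r] P = P) :
    Ideal.Quotient.mk 𝔭
        (∑ i ∈ Finset.range (2 * 3 ^ r), 2 ^ (2 * 3 ^ r - 1 - i) * (gR^[i] P).2) =
      (∑ i ∈ Finset.range (2 * 3 ^ r),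
        (-1 : 𝓞 K ⧸ 𝔭) ^ (2 * 3 ^ r - 1 - i) * Ideal.Quotient.mk 𝔭 (gR^[i] P).2) ∧
    ∀ A : Algebra (ZMod 3) (𝓞 K ⧸ 𝔭),
      letI := A
      Ideal.Quotient.mk 𝔭
          (∑ i ∈ Finset.range (2 * 3 ^ r), 2 ^ (2 * 3 ^ r - 1 - i) * (gR^[i] P).2) =
        algebraMap (ZMod 3) (𝓞 K ⧸ 𝔭)
          (Algebra.trace (ZMod 3) (𝓞 K ⧸ 𝔭)
            (Ideal.Quotient.mk 𝔭 P.1 - Ideal.Quotient.mk 𝔭 P.2)) := by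
  have h2 : Ideal.Quotient.mk 𝔭 (2 : 𝓞 K) = -1 := by
    rw [eq_neg_iff_add_eq_zero, ← map_one (Ideal.Quotient.mk 𝔭), ← map_add, two_add_one_eq_three]
    exact Ideal.Quotient.eq_zero_iff_mem.mpr h3
  have hmod : Ideal.Quotient.mk 𝔭
        (∑ i ∈ Finset.range (2 * 3 ^ r), 2 ^ (2 * 3 ^ r - 1 - i) * (gR^[i] P).2) =
      ∑ i ∈ Finset.range (2 * 3 ^ r),
        (-1 : 𝓞 K ⧸ 𝔭) ^ (2 * 3 ^ r - 1 - i) * Ideal.Quotient.mk 𝔭 (gR^[i] P).2 := by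
    simp [map_sum, h2]
  refine ⟨hmod, fun A => ?_⟩
  let _ := A
  have : 𝔭.IsMaximal := hprime.isMaximal fun h => by simp [h] at h3
  let _ := Ideal.Quotient.field 𝔭
  have : Finite (𝓞 K ⧸ 𝔭) := Nat.finite_of_card_ne_zero (by rw [hcard]; positivity)
  have hF : Module.finrank (ZMod 3) (𝓞 K ⧸ 𝔭) = 3 ^ r := by
    have h := Module.natCard_eq_pow_finrank (K := ZMod 3) (V := 𝓞 K ⧸ 𝔭)
    rw [hcard, Nat.card_zmod] at h
    exact (Nat.pow_right_injective (Nat.le_succ 2) h).symm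
  have hn : 0 < 2 * 3 ^ r := by positivity
  have hP1 : P.1 = (gR^[2 * 3 ^ r - 1] P).2 := by
    simpa using gR_iterate_fst_of_periodic hn hP 0
  rw [hmod, sum_congr rfl fun i hi => by rw [neg_one_pow_sub_one_sub (even_two_mul _)
    (mem_range.mp hi)], hP1]
  refine alternating_sum_eq_trace_of_cube_recurrence r hF (fun i => ?_) (fun i => ?_)
  · rw [gR_iterate_add_period hP]
  · rw [← map_pow, gR_iterate_snd_cube_of_periodic hn hP, map_sub, map_add]
end

section
/- Let d ≥ 4 be an integer and p a prime number, and let v be a nonarchimedean absolute value on ℚ̄ (i.e. v is multiplicative, v(a) = 0 iff a = 0, and v(a+b) ≤ max(v(a), v(b))) with v(p) = 1/p. Then: (i) every x₀ ∈ ℚ̄ with x₀^{d−2} − x₀ − p^{−(d−3)} = 0 satisfies v(x₀) = p^{(d−3)/(d−2)}; (ii) for every such x₀ there exists a sequence (x_n,y_n)_{n≥0} in ℚ̄² with (x_0,y_0) = (x₀,x₀) and, for every n ≥ 0, y_{n+1} ≠ 0, x_{n+1} = y_n, and x_{n+1}^d / y_{n+1}² − p^{−(d−3)} = x_n; and (iii)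 every sequence (x_n,y_n)_{n≥0} satisfying these conditions satisfies v(x_n) = v(y_n) = p^{(d−3)/(d−2)} for all n ≥ 0. -/
/-- Being a backward orbit of `(x₀,x₀)` under `f_{d,p}(x,y) = (x^d/y² - p^{-(d-3)}, x)`:
`s 0 = (x₀,x₀)` and for all `n`, `y_{n+1} ≠ 0`, `x_{n+1} = y_n`, and
`x_{n+1}^d / y_{n+1}² - p^{-(d-3)} = x_n`. -/
def IsBackwardOrbit (d p : ℕ) (x₀ : Qbar) (s : ℕ → Qbar × Qbar) : Prop :=
  s 0 = (x₀, x₀) ∧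
    ∀ n : ℕ, (s (n + 1)).2 ≠ 0 ∧ (s (n + 1)).1 = (s n).2 ∧
      (s (n + 1)).1 ^ d / (s (n + 1)).2 ^ 2 - ((p : Qbar) ^ (d - 3))⁻¹ = (s n).1

noncomputable instance : IsAlgClosed Qbar := inferInstanceAs (IsAlgClosed (AlgebraicClosure ℚ))

theorem exists_seq_of_forall_exists {α : Type*} {P : α → Prop} {R : α → α → Prop} {a : α}
    (ha : P a) (h : ∀ a, P a → ∃ b, P b ∧ R a b) :
    ∃ s : ℕ → α, s 0 = a ∧ ∀ n, R (s n) (s (n + 1)) := by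
  have h' : ∀ x : Subtype P, ∃ y : Subtype P, R x y := fun x =>
    let ⟨b, hb, hr⟩ := h x x.2
    ⟨⟨b, hb⟩, hr⟩
  choose g hg using h'
  refine ⟨fun n => (g^[n] ⟨a, ha⟩ : α), rfl, fun n => ?_⟩
  simp only [Function.iterate_succ_apply']
  exact hg _

theorem Real.rpow_natCast_div_pow {x : ℝ} (hx : 0 ≤ x) (k : ℕ) {m : ℕ} (hm : m ≠ 0) :
    (x ^ ((k : ℝ) / m)) ^ m = x ^ k := by
  rw [← Real.rpow_natCast _ m, ← Real.rpow_mul hx, div_mul_cancel₀ _ (Nat.cast_ne_zero.2 hm),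
    Real.rpow_natCast]

theorem one_lt_and_lt_of_pow_eq {A r : ℝ} {m : ℕ} (hA : 0 ≤ A) (hm : 2 ≤ m) (hr : 1 < r)
    (h : A ^ m = r) : 1 < A ∧ A < r := by
  have hA1 : 1 < A := (one_lt_pow_iff_of_nonneg hA (by omega)).1 (h ▸ hr)
  exact ⟨hA1, h ▸ lt_self_pow₀ hA1 (by omega)⟩

def AbsoluteValue.ofIsNonarchimedean {R S : Type*} [Semiring R] [Semiring S] [LinearOrder S]
    [IsOrderedRing S] (v : R → S) (nonneg : ∀ a, 0 ≤ v a)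
    (map_mul : ∀ a b, v (a * b) = v a * v b)
    (eq_zero : ∀ a, v a = 0 ↔ a = 0) (ultra : IsNonarchimedean v) : AbsoluteValue R S where
  toFun := v
  map_mul' := map_mul
  nonneg' := nonneg
  eq_zero' := eq_zero
  add_le' a b := (ultra a b).trans (max_le_add_of_nonneg (nonneg a) (nonneg b))

-- Without `q'.2 ≠ 0`, the junk value `x / 0 = 0` would produce spurious preimages `(x, 0)`.
def IsPreimage {K : Type*} [Field K] (d : ℕ) (c : K) (q' q : K × K) : Prop :=
  q'.2 ≠ 0 ∧ q'.1 = q.2 ∧ q'.1 ^ d / q'.2 ^ 2 - c = q.1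

theorem exists_isPreimage {K : Type*} [Field K] [IsAlgClosed K] (d : ℕ) {c : K} {q : K × K}
    (hx : q.1 + c ≠ 0) (hy : q.2 ≠ 0) : ∃ y' : K, IsPreimage d c (q.2, y') q := by
  obtain ⟨z, hz⟩ := IsAlgClosed.exists_pow_nat_eq (q.2 ^ d / (q.1 + c)) two_pos
  have hz0 : z ≠ 0 := by
    rintro rfl
    rw [zero_pow two_ne_zero, eq_comm, div_eq_zero_iff] at hz
    exact hz.elim (pow_ne_zero d hy) hx
  refine ⟨z, hz0, rfl, ?_⟩
  rw [hz]
  field_simp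
  ring

section Nonarchimedean

variable {K : Type*} [Field K] {v : AbsoluteValue K ℝ} (hv : IsNonarchimedean v)
  {c : K} {A : ℝ}
include hv

theorem map_eq_of_pow_sub_sub_eq_zero {m : ℕ} (hm : 2 ≤ m) (hc : 1 < v c) (hA : 0 ≤ A)
    (hAc : A ^ m = v c) {x : K} (hx : x ^ m - x - c = 0) : v x = A := by
  have hxc : x ^ m = x + c := by linear_combination hx
  refine (pow_left_inj₀ (v.nonneg x) hA (by omega : m ≠ 0)).1 ?_
  rw [hAc]
  rcases lt_or_ge (v x) (v c) with hlt | hge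
  · rw [← v.map_pow, hxc, hv.add_eq_right_of_lt hlt]
  · have hsum : v (x + c) ≤ v x := (hv x c).trans (max_le le_rfl hge)
    have hgrow : v x < v x ^ m := lt_self_pow₀ (hc.trans_le hge) (by omega)
    rw [← hxc, v.map_pow] at hsum
    exact absurd hsum hgrow.not_ge

theorem IsPreimage.map_snd_eq {d : ℕ} (hd : 2 ≤ d) (hAc : A ^ (d - 2) = v c) {q q' : K × K}
    (h : IsPreimage d c q' q) (hx : v q.1 < v c) (hx' : v q'.1 = A) : v q'.2 = A := by
  obtain ⟨hy', -, hstep⟩ := h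
  have hc : 0 < v c := (v.nonneg _).trans_lt hx
  have hA : 0 ≤ A := hx' ▸ v.nonneg _
  have hval : A ^ d / v q'.2 ^ 2 = v c := by
    rw [← hx', ← v.map_pow, ← v.map_pow, ← map_div₀, eq_add_of_sub_eq hstep,
      hv.add_eq_right_of_lt hx]
  have hAd : A ^ d = A ^ 2 * v c := by rw [← hAc, mul_comm, pow_sub_mul_pow _ hd]
  rw [hAd, div_eq_iff (pow_ne_zero 2 (v.ne_zero hy')), mul_comm] at hval
  exact (pow_left_inj₀ (v.nonneg _) hA two_ne_zero).1 (mul_left_cancel₀ hc.ne' hval).symm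

variable {d : ℕ} (hd : 4 ≤ d) (hc : 1 < v c) (hAc : A ^ (d - 2) = v c)
include hd hc hAc

theorem IsPreimage.map_eq {q q' : K × K} (h : IsPreimage d c q' q) (hq : v q.1 = A ∧ v q.2 = A) :
    v q'.1 = A ∧ v q'.2 = A := by
  have hx' : v q'.1 = A := h.2.1 ▸ hq.2
  have hAc' : A < v c := (one_lt_and_lt_of_pow_eq (hq.1 ▸ v.nonneg _) (by omega) hc hAc).2
  exact ⟨hx', h.map_snd_eq hv (by omega) hAc (hq.1 ▸ hAc') hx'⟩

theorem exists_isPreimage_map_eq [IsAlgClosed K] {q : K × K} (hq : v q.1 = A ∧ v q.2 = A) :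
    ∃ q', (v q'.1 = A ∧ v q'.2 = A) ∧ IsPreimage d c q' q := by
  obtain ⟨hA1, hAc'⟩ := one_lt_and_lt_of_pow_eq (hq.1 ▸ v.nonneg _) (by omega) hc hAc
  have hx : q.1 + c ≠ 0 := by
    rw [← v.pos_iff, hv.add_eq_right_of_lt (hq.1 ▸ hAc')]
    linarith
  have hy : q.2 ≠ 0 := by
    rw [← v.pos_iff, hq.2]
    linarith
  obtain ⟨y', h⟩ := exists_isPreimage d hx hy
  exact ⟨_, h.map_eq hv hd hc hAc hq, h⟩

end Nonarchimedean

/-- Let `d ≥ 4`, `p` prime, and `v` a nonarchimedean absolute value on `ℚ̄` with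
`v(p) = 1/p`.  Then (i) every root `x₀` of `x^{d-2} - x - p^{-(d-3)}` has
`v(x₀) = p^{(d-3)/(d-2)}`; (ii) every such `x₀` admits a backward orbit of `(x₀,x₀)` under
`f_{d,p}`; and (iii) every such backward orbit satisfies
`v(x_n) = v(y_n) = p^{(d-3)/(d-2)}` for all `n`. -/
theorem stmt15 (d p : ℕ) (hd : 4 ≤ d) (hp : p.Prime)
    (v : Qbar → ℝ)
    (hv_nonneg : ∀ a, 0 ≤ v a)
    (hv_mul : ∀ a b, v (a * b) = v a * v b)
    (hv_eq_zero : ∀ a, v a = 0 ↔ a = 0)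
    (hv_ultra : ∀ a b, v (a + b) ≤ max (v a) (v b))
    (hv_p : v (p : Qbar) = 1 / (p : ℝ)) :
    (∀ x₀ : Qbar, x₀ ^ (d - 2) - x₀ - ((p : Qbar) ^ (d - 3))⁻¹ = 0 →
      v x₀ = (p : ℝ) ^ (((d : ℝ) - 3) / ((d : ℝ) - 2))) ∧
    (∀ x₀ : Qbar, x₀ ^ (d - 2) - x₀ - ((p : Qbar) ^ (d - 3))⁻¹ = 0 →
      ∃ s : ℕ → Qbar × Qbar, IsBackwardOrbit d p x₀ s) ∧
    (∀ x₀ : Qbar, x₀ ^ (d - 2) - x₀ - ((p : Qbar) ^ (d - 3))⁻¹ = 0 →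
      ∀ s : ℕ → Qbar × Qbar, IsBackwardOrbit d p x₀ s →
        ∀ n : ℕ, v (s n).1 = (p : ℝ) ^ (((d : ℝ) - 3) / ((d : ℝ) - 2)) ∧
          v (s n).2 = (p : ℝ) ^ (((d : ℝ) - 3) / ((d : ℝ) - 2))) := by
  set w := AbsoluteValue.ofIsNonarchimedean v hv_nonneg hv_mul hv_eq_zero hv_ultra
  have hw : IsNonarchimedean w := hv_ultra
  set c : Qbar := ((p : Qbar) ^ (d - 3))⁻¹
  set A : ℝ := (p : ℝ) ^ (((d : ℝ) - 3) / ((d : ℝ) - 2))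
  have hp1 : (1 : ℝ) < p := by exact_mod_cast hp.one_lt
  have hwc : w c = (p : ℝ) ^ (d - 3) := by
    rw [map_inv₀, w.map_pow]
    change (v p ^ (d - 3))⁻¹ = _
    rw [hv_p, one_div, inv_pow, inv_inv]
  have hc : 1 < w c := hwc ▸ one_lt_pow₀ hp1 (by omega)
  have hA : 0 ≤ A := by positivity
  have hAc : A ^ (d - 2) = w c := by
    rw [hwc, ← Real.rpow_natCast_div_pow (by positivity) (d - 3) (m := d - 2) (by omega),
      Nat.cast_sub (by omega), Nat.cast_sub (by omega)]
    norm_num [A]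
  have root (x₀ : Qbar) : x₀ ^ (d - 2) - x₀ - c = 0 → w x₀ = A :=
    map_eq_of_pow_sub_sub_eq_zero hw (by omega) hc hA hAc
  refine ⟨root, fun x₀ hx₀ => ?_, fun x₀ hx₀ s hs n => ?_⟩
  · obtain ⟨s, hs0, hs⟩ := exists_seq_of_forall_exists
      (P := fun q => w q.1 = A ∧ w q.2 = A) (R := fun q q' => IsPreimage d c q' q)
      (a := (x₀, x₀))
      ⟨root x₀ hx₀, root x₀ hx₀⟩ fun q hq => exists_isPreimage_map_eq hw hd hc hAc hq
    exact ⟨s, hs0, hs⟩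
  · induction n with
    | zero => exact hs.1 ▸ ⟨root x₀ hx₀, root x₀ hx₀⟩
    | succ n ih => exact IsPreimage.map_eq hw hd hc hAc (hs.2 n) ih
end

section
/- Let d ≥ 4 be an integer, p a prime number, and t a real number such that either d ≥ 5 and t ≥ 1, or d = 4 and t ≥ (1+√3)/2. Let a, b, a', b' be complex numbers with b ≠ 0 and b' ≠ 0, satisfying a'^d / b'² − p^{−(d−3)} = a and a' = b. If |b| ≥ (1 + 1/(2t))·|a| and |a| ≥ t, then |b'| ≥ (1 + 1/(2t))·|a'|, |a'| ≥ t, and |b'| ≥ |b|^{(d−1)/2}. -/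
/-!
Write `B = ‖b‖ = ‖a'‖`, `B' = ‖b'‖` and `ε = p^{-(d-3)}`, so `‖ε‖ ≤ 1/2`. Since `‖a‖ ≥ t`, the
hypothesis `‖b‖ ≥ (1 + 1/(2t))‖a‖` gives `B ≥ ‖a‖ + 1/2 ≥ t + 1/2`, hence
`‖a'^d / b'^2‖ = ‖a + ε‖ ≤ B` and so `B^(d-1) ≤ B'^2`. This is the third claim, and the first one
follows from `(1 + 1/(2t))^2 ≤ B^(d-3)`.
-/

lemma norm_inv_natCast_pow_le_half {p k : ℕ} (hp : 2 ≤ p) (hk : 1 ≤ k) :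
    ‖((p : ℂ) ^ k)⁻¹‖ ≤ 1 / 2 := by
  have hpk : (2 : ℝ) ≤ (p : ℝ) ^ k :=
    calc (2 : ℝ) ≤ p := by exact_mod_cast hp
      _ = (p : ℝ) ^ 1 := (pow_one _).symm
      _ ≤ (p : ℝ) ^ k := pow_le_pow_right₀ (by norm_cast; omega) hk
  rw [norm_inv, norm_pow, Complex.norm_natCast, one_div]
  exact inv_anti₀ two_pos hpk

lemma norm_pow_pred_le_norm_sq {𝕜 : Type*} [NormedDivisionRing 𝕜] {x y : 𝕜} {d : ℕ}
    (hx : x ≠ 0) (hy : y ≠ 0) (hd : 1 ≤ d) (h : ‖x ^ d / y ^ 2‖ ≤ ‖x‖) :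
    ‖x‖ ^ (d - 1) ≤ ‖y‖ ^ 2 := by
  have hx' : 0 < ‖x‖ := norm_pos_iff.mpr hx
  have hy' : 0 < ‖y‖ ^ 2 := pow_pos (norm_pos_iff.mpr hy) 2
  rw [norm_div, norm_pow, norm_pow, div_le_iff₀ hy', ← Nat.sub_add_cancel hd, pow_succ,
    mul_comm ‖x‖] at h
  exact le_of_mul_le_mul_right h hx'

lemma Real.rpow_div_two_le_of_pow_le_sq {x y : ℝ} {n : ℕ} (hx : 0 ≤ x) (hy : 0 ≤ y)
    (h : x ^ n ≤ y ^ 2) : x ^ ((n : ℝ) / 2) ≤ y := by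
  rw [Real.rpow_div_two_eq_sqrt _ hx, Real.rpow_natCast]
  refine le_of_pow_le_pow_left₀ two_ne_zero hy ?_
  rwa [← pow_mul, mul_comm, pow_mul, Real.sq_sqrt hx]

lemma add_half_le_of_one_add_inv_two_mul_le {t A B : ℝ} (ht : 0 < t) (hA : t ≤ A)
    (h : (1 + 1 / (2 * t)) * A ≤ B) : A + 1 / 2 ≤ B := by
  have : 1 / 2 ≤ 1 / (2 * t) * A := by
    rw [div_mul_eq_mul_div, le_div_iff₀ (by positivity)]
    linarith
  linarith

/-- The threshold `(1 + √3)/2` is the larger root of `2t² - 2t - 1`, and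
`(1 + 1/(2t))² ≤ t + 1/2 ↔ 2t² - 2t - 1 ≥ 0` for `t > 0`. -/
lemma one_add_inv_two_mul_sq_le {t : ℝ} (ht : (1 + Real.sqrt 3) / 2 ≤ t) :
    (1 + 1 / (2 * t)) ^ 2 ≤ t + 1 / 2 := by
  have hs3 : Real.sqrt 3 ^ 2 = 3 := Real.sq_sqrt (by norm_num)
  have hs1 : 1 ≤ Real.sqrt 3 := by nlinarith [Real.sqrt_nonneg 3]
  have htpos : 0 < t := by linarith
  have hquad : 0 ≤ 2 * t ^ 2 - 2 * t - 1 := by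
    nlinarith [mul_nonneg (by linarith : (0 : ℝ) ≤ 2 * t - 1 - Real.sqrt 3)
      (by linarith : (0 : ℝ) ≤ 2 * t - 1 + Real.sqrt 3)]
  rw [show 1 + 1 / (2 * t) = (2 * t + 1) / (2 * t) by field_simp, div_pow,
    div_le_iff₀ (by positivity)]
  nlinarith

lemma one_add_inv_two_mul_sq_le_pow {d : ℕ} {t B : ℝ}
    (ht : (5 ≤ d ∧ 1 ≤ t) ∨ (d = 4 ∧ (1 + Real.sqrt 3) / 2 ≤ t)) (hB : t + 1 / 2 ≤ B) :
    (1 + 1 / (2 * t)) ^ 2 ≤ B ^ (d - 3) := by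
  rcases ht with ⟨hd, ht⟩ | ⟨rfl, ht⟩
  · have hc : 1 + 1 / (2 * t) ≤ B := by
      have : 1 / (2 * t) ≤ 1 / 2 := by
        rw [div_le_div_iff₀ (by positivity) two_pos]
        linarith
      linarith
    calc (1 + 1 / (2 * t)) ^ 2 ≤ B ^ 2 := pow_le_pow_left₀ (by positivity) hc 2
      _ ≤ B ^ (d - 3) := pow_le_pow_right₀ (by linarith) (by omega)
  · simpa using (one_add_inv_two_mul_sq_le ht).trans hB

/-- Let `d ≥ 4`, `p` prime, and `t` a real number with either (`d ≥ 5` and `t ≥ 1`) or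
(`d = 4` and `t ≥ (1+√3)/2`).  If `a, b, a', b' ∈ ℂ` with `b, b' ≠ 0` satisfy
`a'^d / b'² - p^{-(d-3)} = a` and `a' = b` (i.e. `f_{d,p}(a',b') = (a,b)`), and
`|b| ≥ (1 + 1/(2t))·|a|` and `|a| ≥ t`, then `|b'| ≥ (1 + 1/(2t))·|a'|`, `|a'| ≥ t` and
`|b'| ≥ |b|^{(d-1)/2}`. -/
theorem stmt16 (d p : ℕ) (hd : 4 ≤ d) (hp : p.Prime) (t : ℝ)
    (ht : (5 ≤ d ∧ 1 ≤ t) ∨ (d = 4 ∧ (1 + Real.sqrt 3) / 2 ≤ t))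
    (a b a' b' : ℂ) (hb : b ≠ 0) (hb' : b' ≠ 0)
    (hmap : a' ^ d / b' ^ 2 - ((p : ℂ) ^ (d - 3))⁻¹ = a) (ha' : a' = b)
    (hab : (1 + 1 / (2 * t)) * ‖a‖ ≤ ‖b‖)
    (hat : t ≤ ‖a‖) :
    (1 + 1 / (2 * t)) * ‖a'‖ ≤ ‖b'‖ ∧
    t ≤ ‖a'‖ ∧
    ‖b‖ ^ (((d : ℝ) - 1) / 2) ≤ ‖b'‖ := by
  subst ha'
  have ht1 : 1 ≤ t := by
    rcases ht with ⟨-, h⟩ | ⟨-, h⟩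
    · exact h
    · linarith [Real.one_lt_sqrt_two.trans_le (Real.sqrt_le_sqrt (by norm_num : (2 : ℝ) ≤ 3))]
  have hB := add_half_le_of_one_add_inv_two_mul_le (by linarith) hat hab
  have hε := norm_inv_natCast_pow_le_half hp.two_le (k := d - 3) (by omega)
  have hquot : ‖a' ^ d / b' ^ 2‖ ≤ ‖a'‖ := by
    rw [eq_add_of_sub_eq hmap]
    linarith [norm_add_le a ((p : ℂ) ^ (d - 3))⁻¹]
  have hpow := norm_pow_pred_le_norm_sq hb hb' (by omega) hquot
  refine ⟨le_of_pow_le_pow_left₀ two_ne_zero (norm_nonneg _) ?_, by linarith, ?_⟩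
  · calc ((1 + 1 / (2 * t)) * ‖a'‖) ^ 2 = (1 + 1 / (2 * t)) ^ 2 * ‖a'‖ ^ 2 := mul_pow _ _ _
      _ ≤ ‖a'‖ ^ (d - 3) * ‖a'‖ ^ 2 := by
        gcongr
        exact one_add_inv_two_mul_sq_le_pow ht (by linarith)
      _ = ‖a'‖ ^ (d - 1) := by rw [← pow_add]; congr 1; omega
      _ ≤ ‖b'‖ ^ 2 := hpow
  · have hcast : ((d - 1 : ℕ) : ℝ) = (d : ℝ) - 1 := by push_cast [show 1 ≤ d by omega]; ring
    rw [← hcast]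
    exact Real.rpow_div_two_le_of_pow_le_sq (norm_nonneg _) (norm_nonneg _) hpow
end
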